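/- arXiv:0706.3486 — 4 statements merged into one kernel-verified Lean document; each statement's English description precedes it below -/
import Mathlib

section
/- Let w be a cd-word of degree n with associated left sparse set S_w ⊆ [n]. Then the number of subsets T ⊆ S with both T ∈ b[I^w] and [n]\T ∈ b[I^w] equals 2^{|S|−|S_w|} if S ∈ b[I^w], and equals 0 otherwise, for any S ⊆ [n]. -/
/-- The degree of a cd-word (`false` = c, degree 1; `true` = d, degree 2). -/
def degw (w : List Bool) : ℕ := (w.map (fun b => if b then 2 else 1)).sum

/-- The left sparse set `S_w` of a cd-word: degrees of prefixes ending at each d. -/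
def Sw (w : List Bool) : Finset ℕ :=
  ((Finset.range w.length).filter (fun j => w.getD j false = true)).image
    (fun j => degw (w.take (j + 1)))

/-- `T ∈ b[I^w]`: `T` meets every interval `{i-1, i}` with `i ∈ S_w`. -/
def blocks (w : List Bool) (T : Finset ℕ) : Prop := ∀ i ∈ Sw w, i - 1 ∈ T ∨ i ∈ T

instance (w : List Bool) (T : Finset ℕ) : Decidable (blocks w T) := by
  unfold blocks; infer_instance

/-! The intervals `{i - 1, i}`, `i ∈ S_w`, are pairwise disjoint two-element subsets of `[n]`,
so `T` and `[n] \ T` both block `I^w` exactly when `T` contains exactly one point of each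
interval. Such `T ⊆ S` are chosen independently: one point of `S ∩ {i - 1, i}` for every `i`,
and any subset of the rest of `S`. Their number is `∏ |S ∩ {i - 1, i}| · 2 ^ |S \ ⋃ I^w|`, which
vanishes if an interval misses `S`, and otherwise equals `2 ^ (|S| - |S_w|)` because each factor,
being `1` or `2`, is `2 ^ (|S ∩ {i - 1, i}| - 1)`. -/

open Finset

section DisjointPairs

variable {ι α : Type*} [DecidableEq α]

theorem card_filter_powerset_inter_sdiff (S J : Finset α) (p q : Finset α → Prop)
    [DecidablePred p] [DecidablePred q] :
    #{T ∈ S.powerset | p (T ∩ J) ∧ q (T \ J)} =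
      #{x ∈ (S ∩ J).powerset | p x} * #{y ∈ (S \ J).powerset | q y} := by
  rw [← card_product]
  refine card_nbij' (fun T => (T ∩ J, T \ J)) (fun xy => xy.1 ∪ xy.2) ?_ ?_ ?_ ?_
  · intro T hT
    simp only [mem_coe, mem_filter, mem_powerset, mem_product] at hT ⊢
    exact ⟨⟨inter_subset_inter_right hT.1, hT.2.1⟩, sdiff_subset_sdiff hT.1 le_rfl, hT.2.2⟩
  · rintro ⟨x, y⟩ hxy
    simp only [mem_coe, mem_filter, mem_powerset, mem_product] at hxy ⊢
    obtain ⟨⟨hxS, hpx⟩, hyS, hqy⟩ := hxy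
    have hx : (x ∪ y) ∩ J = x := by grind
    have hy : (x ∪ y) \ J = y := by grind
    exact ⟨by grind, by rwa [hx], by rwa [hy]⟩
  · intro T _
    exact sup_inf_sdiff T J
  · rintro ⟨x, y⟩ hxy
    simp only [mem_coe, mem_filter, mem_powerset, mem_product] at hxy
    obtain ⟨⟨hxS, -⟩, hyS, -⟩ := hxy
    simp only [Prod.mk.injEq]
    constructor <;> grind

theorem sdiff_inter_eq_inter_of_disjoint {J K : Finset α} (h : Disjoint J K) (T : Finset α) :
    (T \ J) ∩ K = T ∩ K := by
  rw [sdiff_inter_right_comm, sdiff_eq_self_of_disjoint (h.symm.mono_left inter_subset_right)]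

theorem card_filter_powerset_forall_card_inter_eq_one [DecidableEq ι] {I : ι → Finset α}
    {A : Finset ι} (hA : (A : Set ι).PairwiseDisjoint I) (S : Finset α) :
    #{T ∈ S.powerset | ∀ a ∈ A, #(T ∩ I a) = 1} =
      (∏ a ∈ A, #(S ∩ I a)) * 2 ^ #(S \ A.biUnion I) := by
  induction A using Finset.induction_on generalizing S with
  | empty => simp [card_powerset]
  | @insert a A ha ih =>
    have hdisj : ∀ b ∈ A, Disjoint (I a) (I b) := fun b hb =>
      hA (mem_insert_self a A) (mem_insert_of_mem hb) (ne_of_mem_of_not_mem hb ha).symm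
    have hsplit : ∀ T : Finset α, (∀ b ∈ insert a A, #(T ∩ I b) = 1) ↔
        #(T ∩ I a) = 1 ∧ ∀ b ∈ A, #((T \ I a) ∩ I b) = 1 := fun T => by
      rw [forall_mem_insert]
      refine and_congr_right fun _ => forall₂_congr fun b hb => ?_
      rw [sdiff_inter_eq_inter_of_disjoint (hdisj b hb)]
    simp_rw [hsplit]
    rw [card_filter_powerset_inter_sdiff S (I a) (#· = 1) (fun y => ∀ b ∈ A, #(y ∩ I b) = 1),
      ← powersetCard_eq_filter, card_powersetCard, Nat.choose_one_right,
      ih (hA.subset (coe_subset.mpr (subset_insert a A))), prod_insert ha,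
      biUnion_insert, sdiff_sdiff_left, mul_assoc]
    congr 2
    exact prod_congr rfl fun b hb => by rw [sdiff_inter_eq_inter_of_disjoint (hdisj b hb)]

theorem card_filter_powerset_forall_card_inter_eq_one_of_card_eq_two [DecidableEq ι]
    {I : ι → Finset α} {A : Finset ι} (hA : (A : Set ι).PairwiseDisjoint I)
    (hI : ∀ a ∈ A, #(I a) = 2) (S : Finset α) :
    #{T ∈ S.powerset | ∀ a ∈ A, #(T ∩ I a) = 1} =
      if ∀ a ∈ A, (S ∩ I a).Nonempty then 2 ^ (#S - #A) else 0 := by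
  rw [card_filter_powerset_forall_card_inter_eq_one hA]
  split_ifs with hS
  · have hpos : ∀ a ∈ A, 1 ≤ #(S ∩ I a) := fun a ha => card_pos.mpr (hS a ha)
    have hle : ∀ a ∈ A, #(S ∩ I a) ≤ 2 := fun a ha =>
      hI a ha ▸ card_le_card inter_subset_right
    have hsum : ∑ a ∈ A, #(S ∩ I a) = #(S ∩ A.biUnion I) := by
      rw [inter_biUnion, card_biUnion (hA.mono fun a => inter_subset_right)]
    have hA_le : #A ≤ #(S ∩ A.biUnion I) := by
      rw [← hsum, card_eq_sum_ones]; exact sum_le_sum hpos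
    have hprod : ∏ a ∈ A, #(S ∩ I a) = 2 ^ (#(S ∩ A.biUnion I) - #A) := by
      rw [← hsum, card_eq_sum_ones, ← sum_tsub_distrib A hpos, ← prod_pow_eq_pow_sum]
      refine prod_congr rfl fun a ha => ?_
      have := hpos a ha
      have := hle a ha
      interval_cases #(S ∩ I a) <;> rfl
    rw [hprod, ← pow_add]
    have := card_sdiff_add_card_inter S (A.biUnion I)
    congr 1; omega
  · push Not at hS
    obtain ⟨a, ha, hempty⟩ := hS
    rw [prod_eq_zero ha (by rw [hempty, card_empty]), zero_mul]

theorem nonempty_inter_and_nonempty_sdiff_inter_iff {J U : Finset α} (hJ : #J = 2)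
    (hJU : J ⊆ U) (T : Finset α) :
    (T ∩ J).Nonempty ∧ ((U \ T) ∩ J).Nonempty ↔ #(T ∩ J) = 1 := by
  have hsdiff : (U \ T) ∩ J = J \ T := by grind
  have := card_inter_add_card_sdiff J T
  rw [hsdiff, ← card_pos, ← card_pos, inter_comm]
  omega

end DisjointPairs

theorem degw_append (l₁ l₂ : List Bool) : degw (l₁ ++ l₂) = degw l₁ + degw l₂ := by
  simp [degw]

theorem degw_le_of_prefix {l₁ l₂ : List Bool} (h : l₁ <+: l₂) : degw l₁ ≤ degw l₂ := by
  obtain ⟨t, rfl⟩ := h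
  rw [degw_append]
  exact Nat.le_add_right _ _

theorem degw_take_add_one_of_getD {w : List Bool} {j : ℕ} (hj : j < w.length)
    (hd : w.getD j false = true) : degw (w.take (j + 1)) = degw (w.take j) + 2 := by
  have : w[j]? = some true := by
    rw [List.getElem?_eq_getElem hj]
    simpa [List.getD_eq_getElem?_getD, List.getElem?_eq_getElem hj] using hd
  simp [List.take_add_one, this, degw]

theorem exists_of_mem_Sw {w : List Bool} {i : ℕ} (hi : i ∈ Sw w) :
    ∃ j < w.length, w.getD j false = true ∧ degw (w.take j) + 2 = i := by
  simp only [Sw, mem_image, mem_filter, mem_range] at hi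
  obtain ⟨j, ⟨hj, hd⟩, rfl⟩ := hi
  exact ⟨j, hj, hd, (degw_take_add_one_of_getD hj hd).symm⟩

theorem two_le_of_mem_Sw {w : List Bool} {i : ℕ} (hi : i ∈ Sw w) : 2 ≤ i := by
  obtain ⟨j, -, -, rfl⟩ := exists_of_mem_Sw hi
  exact Nat.le_add_left _ _

theorem le_degw_of_mem_Sw {w : List Bool} {i : ℕ} (hi : i ∈ Sw w) : i ≤ degw w := by
  obtain ⟨j, hj, hd, rfl⟩ := exists_of_mem_Sw hi
  rw [← degw_take_add_one_of_getD hj hd]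
  exact degw_le_of_prefix (List.take_prefix _ _)

theorem add_one_lt_of_mem_Sw {w : List Bool} {i i' : ℕ} (hi : i ∈ Sw w) (hi' : i' ∈ Sw w)
    (h : i < i') : i + 1 < i' := by
  obtain ⟨j, hj, hd, rfl⟩ := exists_of_mem_Sw hi
  obtain ⟨j', -, -, rfl⟩ := exists_of_mem_Sw hi'
  have hjj' : j + 1 ≤ j' := by
    by_contra! hle
    have := degw_le_of_prefix (w.take_prefix_take_left (Nat.le_of_lt_succ hle))
    omega
  have := degw_le_of_prefix (w.take_prefix_take_left hjj')
  rw [degw_take_add_one_of_getD hj hd] at this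
  omega

theorem Sw_pairwiseDisjoint (w : List Bool) :
    (Sw w : Set ℕ).PairwiseDisjoint fun i => ({i - 1, i} : Finset ℕ) := by
  intro i hi i' hi' hne
  have := two_le_of_mem_Sw hi
  have := two_le_of_mem_Sw hi'
  have := hne.lt_or_gt.imp (add_one_lt_of_mem_Sw hi hi') (add_one_lt_of_mem_Sw hi' hi)
  simp only [Function.onFun, disjoint_insert_left, disjoint_insert_right, disjoint_singleton,
    mem_insert, mem_singleton]
  omega

theorem blocks_iff (w : List Bool) (T : Finset ℕ) :
    blocks w T ↔ ∀ i ∈ Sw w, (T ∩ {i - 1, i}).Nonempty := by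
  simp [blocks, Finset.Nonempty, and_or_left, exists_or]

theorem stmt_4_general (n : ℕ) (w : List Bool) (S : Finset ℕ)
    (hw : degw w = n) :
    (S.powerset.filter
        (fun T => blocks w T ∧ blocks w (Finset.Icc 1 n \ T))).card
      = if blocks w S then 2 ^ (S.card - (Sw w).card) else 0 := by
  have hcard : ∀ i ∈ Sw w, #({i - 1, i} : Finset ℕ) = 2 := fun i hi =>
    card_pair (by have := two_le_of_mem_Sw hi; omega)
  have hsub : ∀ i ∈ Sw w, ({i - 1, i} : Finset ℕ) ⊆ Icc 1 n := fun i hi => by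
    have := two_le_of_mem_Sw hi
    have := hw ▸ le_degw_of_mem_Sw hi
    intro x hx
    simp only [mem_insert, mem_singleton] at hx
    simp only [mem_Icc]
    omega
  have hexact : ∀ T, blocks w T ∧ blocks w (Icc 1 n \ T) ↔ ∀ i ∈ Sw w, #(T ∩ {i - 1, i}) = 1 :=
    fun T => by
      simp only [blocks_iff, ← forall₂_and]
      exact forall₂_congr fun i hi =>
        nonempty_inter_and_nonempty_sdiff_inter_iff (hcard i hi) (hsub i hi) T
  rw [filter_congr fun T _ => hexact T,
    card_filter_powerset_forall_card_inter_eq_one_of_card_eq_two (Sw_pairwiseDisjoint w) hcard]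
  exact if_congr (blocks_iff w S).symm rfl rfl

/-- for a cd-word `w` of degree `n` and any `S ⊆ [n]`, the number of
`T ⊆ S` with both `T ∈ b[I^w]` and `[n] \ T ∈ b[I^w]` is `2^{|S| - |S_w|}` if
`S ∈ b[I^w]`, and `0` otherwise. -/
theorem stmt_4 (n : ℕ) (w : List Bool) (S : Finset ℕ)
    (hw : degw w = n) (hS : S ⊆ Finset.Icc 1 n) :
    (S.powerset.filter
        (fun T => blocks w T ∧ blocks w (Finset.Icc 1 n \ T))).card
      = if blocks w S then 2 ^ (S.card - (Sw w).card) else 0 :=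
  stmt_4_general n w S hw
end

section
/- In the free associative algebra Q⟨y_1,y_2,...⟩ (with y_0 := 1), the antipode determined by the coproduct Δ(y_k) = Σ_{i+j=k} y_i ⊗ y_j sends y_n to −(χ_n − (−1)^n y_n), where χ_n = Σ_{i+j=n} (−1)^i y_i y_j; consequently, in the quotient A_E = Q⟨y_1,y_2,...⟩/I_E by the ideal generated by all χ_k, the antipode satisfies s(y_n) = (−1)^n y_n and more generally s(y_{β_1}···y_{β_k}) = (−1)^{β_1+···+β_k} y_{β_k}···y_{β_1}. -/
/-- The generators `y_k` of the free associative algebra `ℚ⟨y_1, y_2, …⟩`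
(with the convention `y_0 = 1`). -/
noncomputable def y (k : ℕ) : FreeAlgebra ℚ ℕ :=
  if k = 0 then 1 else FreeAlgebra.ι ℚ k

/-- `χ_n = Σ_{i+j=n} (-1)^i y_i y_j`. -/
noncomputable def chi (n : ℕ) : FreeAlgebra ℚ ℕ :=
  ∑ i ∈ Finset.range (n + 1), ((-1 : ℚ) ^ i) • (y i * y (n - i))

/-- `A_E = ℚ⟨y_1, y_2, …⟩ / I_E`, where `I_E` is the two-sided ideal generated by
the Euler relations `χ_k`, `k ≥ 1`. -/
abbrev AE : Type := RingQuot (fun a b : FreeAlgebra ℚ ℕ => ∃ k, 1 ≤ k ∧ a = chi k ∧ b = 0)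

/-- The quotient map `ℚ⟨y_1, y_2, …⟩ → A_E`. -/
noncomputable def mkA : FreeAlgebra ℚ ℕ →+* AE := RingQuot.mkRingHom _

/-- The image of `y_k` in `A_E`. -/
noncomputable def yA (k : ℕ) : AE := mkA (y k)

/-!
Feeding `s(y_i) = (-1)^i y_i` for `i < n` into the antipode recursion turns
`-Σ_{i<n} s(y_i) y_{n-i}` into `-Σ_{i<n} (-1)^i y_i y_{n-i}`, which is `χ_n` without its
last term `(-1)^n y_n`. In `A_E` the relation `χ_n = 0` thus propagates `s(y_n) = (-1)^n y_n`
by strong induction, and since the signs `(-1)^k` are central, the anti-multiplicativity of `s`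
gives the formula on monomials.
-/

open Finset

section AntipodeRecursion

variable {R : Type*} [Ring R] {s : R → R} {x : ℕ → R}

theorem antipode_eq_of_recursion (hx₀ : x 0 = 1) {n : ℕ}
    (hrec : s (x n) = -∑ i ∈ range n, s (x i) * x (n - i))
    (hlt : ∀ i < n, s (x i) = (-1) ^ i * x i) :
    s (x n) = -(∑ i ∈ range (n + 1), (-1) ^ i * (x i * x (n - i)) - (-1) ^ n * x n) := by
  have hsum : ∑ i ∈ range n, s (x i) * x (n - i)
      = ∑ i ∈ range n, (-1) ^ i * (x i * x (n - i)) :=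
    sum_congr rfl fun i hi => by rw [hlt i (mem_range.mp hi), mul_assoc]
  rw [hrec, hsum, sum_range_succ, Nat.sub_self, hx₀, mul_one, add_sub_cancel_right]

theorem antipode_eq_neg_one_pow_mul (hx₀ : x 0 = 1) (hone : s 1 = 1)
    (hrec : ∀ n, 1 ≤ n → s (x n) = -∑ i ∈ range n, s (x i) * x (n - i))
    (hrel : ∀ n, 1 ≤ n → ∑ i ∈ range (n + 1), (-1) ^ i * (x i * x (n - i)) = 0)
    (n : ℕ) : s (x n) = (-1) ^ n * x n := by
  induction n using Nat.strong_induction_on with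
  | _ n ih =>
    rcases Nat.eq_zero_or_pos n with rfl | hn
    · rw [hx₀, hone, pow_zero, one_mul]
    · rw [antipode_eq_of_recursion hx₀ (hrec n hn) ih, hrel n hn, zero_sub, neg_neg]

end AntipodeRecursion

theorem apply_list_prod_eq_prod_reverse_map {R : Type*} [Monoid R] {s : R → R} (hone : s 1 = 1)
    (hanti : ∀ a b, s (a * b) = s b * s a) (l : List R) :
    s l.prod = (l.reverse.map s).prod := by
  induction l with
  | nil => exact hone
  | cons a l ih => simp [hanti, ih]

theorem list_prod_map_neg_one_pow_mul {R : Type*} [Ring R] (x : ℕ → R) (β : List ℕ) :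
    (β.map fun n => (-1 : R) ^ n * x n).prod = (-1) ^ β.sum * (β.map x).prod := by
  induction β with
  | nil => simp
  | cons b β ih =>
    simp only [List.map_cons, List.prod_cons, List.sum_cons, ih, pow_add]
    rw [mul_assoc, ← mul_assoc (x b), ((Commute.neg_one_left (x b)).pow_left β.sum).eq.symm]
    simp only [mul_assoc]

lemma mkA_chi_eq_zero {k : ℕ} (hk : 1 ≤ k) : mkA (chi k) = 0 := by
  simpa [mkA] using RingQuot.mkRingHom_rel
    (r := fun a b : FreeAlgebra ℚ ℕ => ∃ k, 1 ≤ k ∧ a = chi k ∧ b = 0) ⟨k, hk, rfl, rfl⟩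

lemma yA_zero : yA 0 = 1 := by simp [yA, y]

lemma mkA_chi (n : ℕ) :
    mkA (chi n) = ∑ i ∈ range (n + 1), (-1 : AE) ^ i * (yA i * yA (n - i)) := by
  simp only [chi, map_sum, yA]
  refine sum_congr rfl fun i _ => ?_
  rw [Algebra.smul_def]
  simp

/-- if `s` is the antipode of `A_E` (characterized as the algebra
anti-homomorphism satisfying the recursion `s(y_n) = -Σ_{i=0}^{n-1} s(y_i) y_{n-i}`
coming from the coproduct `Δ(y_k) = Σ_{i+j=k} y_i ⊗ y_j`), then
`s(y_n) = -(χ_n - (-1)^n y_n)`, hence `s(y_n) = (-1)^n y_n` since `χ_n` vanishes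
in `A_E`, and more generally
`s(y_{β_1} ⋯ y_{β_k}) = (-1)^{β_1 + ⋯ + β_k} y_{β_k} ⋯ y_{β_1}`. -/
theorem stmt_9 (s : AE → AE) (hone : s 1 = 1)
    (hanti : ∀ a b : AE, s (a * b) = s b * s a)
    (hrec : ∀ n : ℕ, 1 ≤ n →
      s (yA n) = -∑ i ∈ Finset.range n, s (yA i) * yA (n - i)) :
    (∀ n : ℕ, 1 ≤ n → s (yA n) = -(mkA (chi n) - (-1 : AE) ^ n * yA n)) ∧
    (∀ n : ℕ, s (yA n) = (-1 : AE) ^ n * yA n) ∧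
    (∀ β : List ℕ, s ((β.map yA).prod)
        = (-1 : AE) ^ β.sum * ((β.reverse.map yA).prod)) := by
  have hsign : ∀ n, s (yA n) = (-1 : AE) ^ n * yA n :=
    antipode_eq_neg_one_pow_mul yA_zero hone hrec fun n hn => by
      rw [← mkA_chi, mkA_chi_eq_zero hn]
  refine ⟨fun n hn => ?_, hsign, fun β => ?_⟩
  · rw [mkA_chi]
    exact antipode_eq_of_recursion yA_zero (hrec n hn) fun i _ => hsign i
  · rw [apply_list_prod_eq_prod_reverse_map hone hanti, List.map_reverse, List.map_map,
      ← List.map_reverse, ← List.sum_reverse β, Function.comp_def]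
    simp only [hsign]
    exact list_prod_map_neg_one_pow_mul yA β.reverse
end

section
/- For graded posets P and Q, the g-polynomial is multiplicative: g(P × Q, x) = g(P, x) · g(Q, x). -/
/-!
Put `Φ(P) = Σ_{y ∈ P} g([0̂, y]) (x - 1)^{r(P) - r(y)}`. For `r(P) > 0` the recursion for `f` says
`Φ(P) = (x - 1) f(P) + g(P)`, and the truncation defining `g` says exactly that `g(P)` is the
unique polynomial of degree at most `⌊(r(P) - 1)/2⌋` for which this is divisible by
`x^{⌈r(P)/2⌉}`. Lower intervals of `P × Q` are products of lower intervals, so by induction on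
rank every term of `Φ(P × Q)` except the top one factors, giving
`Φ(P × Q) - g(P × Q) = Φ(P) Φ(Q) - g(P) g(Q)`. Since `g(P) g(Q)` has degree at most
`⌊(r(P × Q) - 1)/2⌋` and `Φ(P) Φ(Q)` is divisible by `x^{⌈r(P)/2⌉ + ⌈r(Q)/2⌉}`, uniqueness
gives `g(P × Q) = g(P) g(Q)`.
-/

/-- The `g`-truncation: from `f = Σ_{i=0}^{n} κ_i x^i`, form
`Σ_{i=0}^{⌊n/2⌋} (κ_i - κ_{i-1}) x^i` (with `κ_{-1} = 0`). -/
noncomputable def gOf (f : Polynomial ℚ) (n : ℕ) : Polynomial ℚ :=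
  ∑ i ∈ Finset.range (n / 2 + 1),
    Polynomial.C (f.coeff i - if i = 0 then 0 else f.coeff (i - 1)) * Polynomial.X ^ i

/-- The `f`-polynomial of a finite bounded poset with rank function `r`, defined by
the recursion `f(P,x) = Σ_{y ≠ ⊤} g([⊥,y], x) (x-1)^{r(⊤)-1-r(y)}` (with
`f(P,x) = g(P,x) = 1` when the rank is `0`), computed with fuel. -/
noncomputable def fP : ℕ → (α : Type) → (i1 : Fintype α) → (i2 : PartialOrder α) →
    (i3 : BoundedOrder α) → (α → ℕ) → Polynomial ℚ
  | 0, _, _, _, _, _ => 1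
  | k + 1, α, i1, i2, i3, r => by
    letI := i1; letI := i2; letI := i3
    classical
    exact if r ⊤ = 0 then 1 else
      ∑ y ∈ Finset.univ.filter (fun y : α => y ≠ ⊤),
        (letI : Fintype (Set.Icc (⊥ : α) y) := (Set.toFinite _).fintype
         letI : Fact ((⊥ : α) ≤ y) := ⟨bot_le⟩
         (if r y = 0 then 1 else
            gOf (fP k (Set.Icc (⊥ : α) y) inferInstance inferInstance inferInstance
              (fun z => r z.1)) (r y - 1))) *
          (Polynomial.X - 1) ^ (r ⊤ - 1 - r y)

/-- The `g`-polynomial of a finite bounded poset with rank function `r`. -/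
noncomputable def gP (α : Type) [i1 : Fintype α] [i2 : PartialOrder α]
    [i3 : BoundedOrder α] (r : α → ℕ) : Polynomial ℚ :=
  if r ⊤ = 0 then 1 else gOf (fP (Fintype.card α) α i1 i2 i3 r) (r ⊤ - 1)

/-- `r` is the rank function of a graded poset: `r(⊥) = 0` and `r` increases
by exactly one along covers. -/
def IsGradedRank (α : Type) [PartialOrder α] [BoundedOrder α] (r : α → ℕ) : Prop :=
  r ⊥ = 0 ∧ ∀ a b : α, a ⋖ b → r b = r a + 1

open Polynomial Finset

lemma coeff_gOf (f : ℚ[X]) (n i : ℕ) :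
    (gOf f n).coeff i =
      if i ≤ n / 2 then f.coeff i - (if i = 0 then 0 else f.coeff (i - 1)) else 0 := by
  simp only [gOf, finsetSum_coeff, coeff_C_mul, coeff_X_pow, mul_ite, mul_one, mul_zero,
    Finset.sum_ite_eq, Finset.mem_range, Nat.lt_succ_iff]

lemma natDegree_gOf_le (f : ℚ[X]) (n : ℕ) : (gOf f n).natDegree ≤ n / 2 :=
  natDegree_le_iff_coeff_eq_zero.2 fun i hi => by
    rw [coeff_gOf, if_neg (by omega)]

lemma X_pow_dvd_sub_one_mul_add_gOf (f : ℚ[X]) (n : ℕ) :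
    X ^ (n / 2 + 1) ∣ (X - 1) * f + gOf f n := by
  refine X_pow_dvd_iff.2 fun i hi => ?_
  rw [coeff_add, sub_mul, one_mul, coeff_sub, coeff_gOf, if_pos (by omega)]
  cases i <;> simp [coeff_X_mul]

lemma gOf_eq_of_dvd {f G : ℚ[X]} {n : ℕ} (hG : G.natDegree ≤ n / 2)
    (hdvd : X ^ (n / 2 + 1) ∣ (X - 1) * f + G) : gOf f n = G := by
  have hsub : X ^ (n / 2 + 1) ∣ G - gOf f n := by
    simpa using dvd_sub hdvd (X_pow_dvd_sub_one_mul_add_gOf f n)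
  refine (sub_eq_zero.1 (eq_zero_of_dvd_of_natDegree_lt hsub ?_)).symm
  rw [natDegree_X_pow]
  exact Nat.lt_succ_of_le ((natDegree_sub_le _ _).trans (max_le hG (natDegree_gOf_le f n)))

-- These reproduce the instances that `fP` installs on lower intervals.
instance {α : Type} [Preorder α] [OrderBot α] {y : α} : Fact ((⊥ : α) ≤ y) := ⟨bot_le⟩

noncomputable instance {α : Type} [Finite α] [Preorder α] [OrderBot α] {y : α} :
    Fintype (Set.Icc (⊥ : α) y) :=
  (Set.toFinite _).fintype

section OrderIsos

variable {α β : Type} [PartialOrder α] [PartialOrder β]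

def OrderIso.iccBot [OrderBot α] [OrderBot β] (e : α ≃o β) (x : α) :
    Set.Icc (⊥ : α) x ≃o Set.Icc (⊥ : β) (e x) where
  toFun z := ⟨e z, bot_le, e.monotone z.2.2⟩
  invFun w := ⟨e.symm w, bot_le, e.symm_apply_le.2 w.2.2⟩
  left_inv z := Subtype.ext (e.symm_apply_apply z)
  right_inv w := Subtype.ext (e.apply_symm_apply w)
  map_rel_iff' := e.le_iff_le

def OrderIso.iccBotProd [OrderBot α] [OrderBot β] (y : α) (z : β) :
    Set.Icc (⊥ : α × β) (y, z) ≃o Set.Icc (⊥ : α) y × Set.Icc (⊥ : β) z where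
  toFun w := (⟨w.1.1, bot_le, w.2.2.1⟩, ⟨w.1.2, bot_le, w.2.2.2⟩)
  invFun p := ⟨(p.1, p.2), bot_le, p.1.2.2, p.2.2.2⟩
  left_inv _ := rfl
  right_inv _ := rfl
  map_rel_iff' := Iff.rfl

def OrderIso.iccBotTop [BoundedOrder α] : α ≃o Set.Icc (⊥ : α) ⊤ where
  toFun a := ⟨a, bot_le, le_top⟩
  invFun z := z
  left_inv _ := rfl
  right_inv _ := rfl
  map_rel_iff' := Iff.rfl

end OrderIsos

open Classical in
lemma fP_succ (k : ℕ) (α : Type) (i1 : Fintype α) (i2 : PartialOrder α) (i3 : BoundedOrder α)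
    (r : α → ℕ) :
    fP (k + 1) α i1 i2 i3 r = if r ⊤ = 0 then 1 else
      ∑ y ∈ univ.filter (fun y : α => y ≠ ⊤),
        (letI : Fintype (Set.Icc (⊥ : α) y) := (Set.toFinite _).fintype
         letI : Fact ((⊥ : α) ≤ y) := ⟨bot_le⟩
         (if r y = 0 then 1 else
            gOf (fP k (Set.Icc (⊥ : α) y) inferInstance inferInstance inferInstance
              (fun z => r z.1)) (r y - 1))) *
          (X - 1) ^ (r ⊤ - 1 - r y) := by
  rw [fP]

lemma card_Icc_bot_lt {α : Type} [Fintype α] [PartialOrder α] [OrderTop α] [OrderBot α]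
    {y : α} (hy : y ≠ ⊤) :
    Fintype.card (Set.Icc (⊥ : α) y) < Fintype.card α :=
  Fintype.card_lt_of_injective_of_notMem _ Subtype.val_injective (b := ⊤)
    fun ⟨z, hz⟩ => hy (top_le_iff.1 (hz ▸ z.2.2))

lemma fP_fuel {k k' : ℕ} {α : Type} [Fintype α] [PartialOrder α] [BoundedOrder α] (r : α → ℕ)
    (hk : Fintype.card α ≤ k) (hk' : Fintype.card α ≤ k') :
    fP k α ‹_› ‹_› ‹_› r = fP k' α ‹_› ‹_› ‹_› r := by
  induction k generalizing k' α with
  | zero => exact absurd hk (Fintype.card_pos_iff.2 ⟨⊥⟩).not_ge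
  | succ k IH =>
    obtain ⟨k', rfl⟩ := Nat.exists_eq_add_one.2 ((Fintype.card_pos_iff.2 ⟨⊥⟩).trans_le hk')
    classical
    rw [fP_succ, fP_succ]
    refine if_congr Iff.rfl rfl (sum_congr rfl fun y hy => ?_)
    have hcard := card_Icc_bot_lt (mem_filter.1 hy).2
    refine congrArg (· * _) (if_congr Iff.rfl rfl (congrArg (gOf · _) ?_))
    exact IH _ (by omega) (by omega)

section Iso

variable {α β : Type} [Fintype α] [PartialOrder α] [BoundedOrder α]
  [Fintype β] [PartialOrder β] [BoundedOrder β]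

lemma fP_orderIso (k : ℕ) (e : α ≃o β) (r : β → ℕ) :
    fP k β ‹_› ‹_› ‹_› r = fP k α ‹_› ‹_› ‹_› (r ∘ e) := by
  induction k generalizing α β with
  | zero => rfl
  | succ k IH =>
    classical
    rw [fP_succ, fP_succ]
    simp only [Function.comp_apply, map_top]
    refine if_congr Iff.rfl rfl (sum_equiv e.toEquiv ?_ fun x _ => ?_).symm
    · simp
    have h := IH (e.iccBot x) (fun z => r z)
    exact congrArg (· * _) (if_congr Iff.rfl rfl (congrArg (gOf · _) h.symm))

lemma gP_orderIso (e : α ≃o β) (r : β → ℕ) : gP β r = gP α (r ∘ e) := by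
  simp only [gP, Function.comp_apply, map_top, Fintype.card_congr e.toEquiv, fP_orderIso _ e r]

end Iso

section Graded

variable {α : Type} [PartialOrder α] [BoundedOrder α] {r : α → ℕ}

lemma IsGradedRank.strictMono [Finite α] (h : IsGradedRank α r) : StrictMono r := by
  intro a b hab
  induction b using WellFoundedLT.induction with
  | _ b IH =>
    obtain ⟨c, hac, hcb⟩ := exists_le_covBy_of_lt hab
    rw [h.2 c b hcb, Nat.lt_succ_iff]
    rcases hac.eq_or_lt with rfl | hac
    · exact le_rfl
    · exact (IH c hcb.lt hac).le

lemma IsGradedRank.Icc_bot (h : IsGradedRank α r) (y : α) :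
    IsGradedRank (Set.Icc (⊥ : α) y) (fun z => r z) := by
  refine ⟨h.1, fun a b hab => h.2 _ _ ?_⟩
  refine (Set.OrdConnected.apply_covBy_apply_iff (OrderEmbedding.subtype _) ?_).2 hab
  simpa [← Set.Iic_def] using Set.ordConnected_Iic (a := y)

lemma IsGradedRank.prod {β : Type} [PartialOrder β] [BoundedOrder β] {r' : β → ℕ}
    (hα : IsGradedRank α r) (hβ : IsGradedRank β r') :
    IsGradedRank (α × β) (fun p => r p.1 + r' p.2) := by
  refine ⟨by simp [Prod.fst_bot, Prod.snd_bot, hα.1, hβ.1], ?_⟩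
  rintro ⟨a₁, b₁⟩ ⟨a₂, b₂⟩ hab
  rcases Prod.mk_covBy_mk_iff.1 hab with ⟨hc, rfl⟩ | ⟨hc, rfl⟩
  · simp [hα.2 _ _ hc, add_right_comm]
  · simp [hβ.2 _ _ hc, add_assoc]

end Graded

section GSum

variable {α : Type} [Fintype α] [PartialOrder α] [BoundedOrder α]

noncomputable def gIcc (r : α → ℕ) (y : α) : ℚ[X] := gP (Set.Icc ⊥ y) (fun z => r z)

lemma gIcc_top (r : α → ℕ) : gIcc r ⊤ = gP α r :=
  gP_orderIso (α := α) OrderIso.iccBotTop (fun z => r z)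

open Classical in
lemma sub_one_mul_fP {r : α → ℕ} (hr : StrictMono r) (h0 : r ⊤ ≠ 0) :
    (X - 1) * fP (Fintype.card α) α ‹_› ‹_› ‹_› r =
      ∑ y ∈ {⊤}ᶜ, gIcc r y * (X - 1) ^ (r ⊤ - r y) := by
  obtain ⟨k, hk⟩ := Nat.exists_eq_add_one.2 (Fintype.card_pos (α := α))
  rw [hk, fP_succ, if_neg h0, mul_sum, compl_singleton, ← filter_ne']
  refine sum_congr rfl fun y hy => ?_
  have hy : y ≠ ⊤ := (mem_filter.1 hy).2
  have hry : r y < r ⊤ := hr (lt_top_iff_ne_top.2 hy)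
  have hfuel := fP_fuel (α := Set.Icc ⊥ y) (k := k) (k' := Fintype.card (Set.Icc ⊥ y))
    (fun z => r z) (by have := card_Icc_bot_lt hy; omega) le_rfl
  rw [show r ⊤ - r y = r ⊤ - 1 - r y + 1 by omega, pow_succ, gIcc, gP, ← hfuel, mul_comm,
    mul_assoc]
  rfl

-- `Φ(P)`
noncomputable def gSum (r : α → ℕ) : ℚ[X] := ∑ y, gIcc r y * (X - 1) ^ (r ⊤ - r y)

open Classical in
lemma gSum_sub_gP (r : α → ℕ) :
    gSum r - gP α r = ∑ y ∈ {⊤}ᶜ, gIcc r y * (X - 1) ^ (r ⊤ - r y) := by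
  rw [gSum, Fintype.sum_eq_add_sum_compl ⊤, gIcc_top, Nat.sub_self, pow_zero, mul_one,
    add_sub_cancel_left]

lemma X_pow_dvd_gSum {r : α → ℕ} (hr : StrictMono r) : X ^ ((r ⊤ + 1) / 2) ∣ gSum r := by
  rcases eq_or_ne (r ⊤) 0 with h0 | h0
  · simp [h0]
  have hdvd := X_pow_dvd_sub_one_mul_add_gOf (fP (Fintype.card α) α ‹_› ‹_› ‹_› r) (r ⊤ - 1)
  rw [← sub_add_cancel (gSum r) (gP α r), gSum_sub_gP, ← sub_one_mul_fP hr h0, gP, if_neg h0]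
  convert hdvd using 2
  omega

lemma natDegree_gP_le (r : α → ℕ) : (gP α r).natDegree ≤ (r ⊤ - 1) / 2 := by
  unfold gP
  split_ifs
  · simp
  · exact natDegree_gOf_le _ _

lemma gP_eq_of_dvd {r : α → ℕ} (hr : StrictMono r) (h0 : r ⊤ ≠ 0) {G : ℚ[X]}
    (hG : G.natDegree ≤ (r ⊤ - 1) / 2) (hdvd : X ^ ((r ⊤ + 1) / 2) ∣ gSum r - gP α r + G) :
    gP α r = G := by
  rw [gSum_sub_gP, ← sub_one_mul_fP hr h0] at hdvd
  rw [gP, if_neg h0]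
  exact gOf_eq_of_dvd hG (by convert hdvd using 2; omega)

end GSum

section Prod

variable {α β : Type} [Fintype α] [PartialOrder α] [BoundedOrder α]
  [Fintype β] [PartialOrder β] [BoundedOrder β]

lemma gIcc_prod (r : α → ℕ) (r' : β → ℕ) (y : α) (z : β) :
    gIcc (fun p : α × β => r p.1 + r' p.2) (y, z) =
      gP (Set.Icc ⊥ y × Set.Icc ⊥ z) (fun p => r p.1 + r' p.2) :=
  gP_orderIso (OrderIso.iccBotProd y z).symm _

open Classical in
lemma gSum_prod_sub_gP {r : α → ℕ} {r' : β → ℕ} (hr : Monotone r) (hr' : Monotone r')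
    (h : ∀ w ≠ ⊤, gIcc (fun p : α × β => r p.1 + r' p.2) w = gIcc r w.1 * gIcc r' w.2) :
    gSum (fun p : α × β => r p.1 + r' p.2) - gP (α × β) (fun p => r p.1 + r' p.2) =
      gSum r * gSum r' - gP α r * gP β r' := by
  have hprod : gSum r * gSum r' = ∑ w : α × β,
      gIcc r w.1 * gIcc r' w.2 * (X - 1) ^ (r ⊤ + r' ⊤ - (r w.1 + r' w.2)) := by
    rw [gSum, gSum, sum_mul_sum, ← univ_product_univ, sum_product]
    refine sum_congr rfl fun y _ => sum_congr rfl fun z _ => ?_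
    have hy := hr (le_top : y ≤ ⊤)
    have hz := hr' (le_top : z ≤ ⊤)
    rw [show r ⊤ + r' ⊤ - (r y + r' z) = (r ⊤ - r y) + (r' ⊤ - r' z) by omega, pow_add]
    ring
  rw [gSum_sub_gP, hprod, Fintype.sum_eq_add_sum_compl ⊤]
  simp only [Prod.fst_top, Prod.snd_top, Nat.sub_self, pow_zero, mul_one, gIcc_top,
    add_sub_cancel_left]
  exact sum_congr (by ext; simp) fun w hw => by rw [h w (by simpa using hw)]

theorem gP_prod {r : α → ℕ} {r' : β → ℕ} (hα : IsGradedRank α r) (hβ : IsGradedRank β r') :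
    gP (α × β) (fun p => r p.1 + r' p.2) = gP α r * gP β r' := by
  induction hn : r ⊤ + r' ⊤ using Nat.strong_induction_on generalizing α β with
  | _ n IH =>
  have hR := hα.prod hβ
  rcases eq_or_ne n 0 with rfl | h0
  · simp [gP, Nat.eq_zero_of_add_eq_zero hn]
  have hIcc : ∀ w ≠ ⊤, gIcc (fun p : α × β => r p.1 + r' p.2) w = gIcc r w.1 * gIcc r' w.2 := by
    rintro ⟨y, z⟩ hw
    have hlt : r y + r' z < n := by simpa [hn] using hR.strictMono (lt_top_iff_ne_top.2 hw)
    rw [gIcc_prod]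
    exact IH _ hlt (hα.Icc_bot y) (hβ.Icc_bot z) rfl
  refine gP_eq_of_dvd hR.strictMono (by simpa [hn]) ?_ ?_
  · calc (gP α r * gP β r').natDegree ≤ (r ⊤ - 1) / 2 + (r' ⊤ - 1) / 2 :=
          natDegree_mul_le.trans (add_le_add (natDegree_gP_le r) (natDegree_gP_le r'))
      _ ≤ _ := by simp only [Prod.fst_top, Prod.snd_top]; omega
  · rw [gSum_prod_sub_gP hα.strictMono.monotone hβ.strictMono.monotone hIcc, sub_add_cancel]
    have hdvd := mul_dvd_mul (X_pow_dvd_gSum hα.strictMono) (X_pow_dvd_gSum hβ.strictMono)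
    rw [← pow_add] at hdvd
    refine (pow_dvd_pow X ?_).trans hdvd
    simp only [Prod.fst_top, Prod.snd_top]
    omega

end Prod

/-- for graded posets `P` and `Q`,
`g(P × Q, x) = g(P, x) · g(Q, x)`. -/
theorem stmt_16 (α β : Type) [Fintype α] [PartialOrder α] [BoundedOrder α]
    [Fintype β] [PartialOrder β] [BoundedOrder β]
    (r : α → ℕ) (r' : β → ℕ)
    (hα : IsGradedRank α r) (hβ : IsGradedRank β r') :
    gP (α × β) (fun p => r p.1 + r' p.2) = gP α r * gP β r' :=
  gP_prod hα hβ
end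

section
/- For all n ≥ 0, the degree-(n+1) homogeneous component of the quasisymmetric functions decomposes as a direct sum Q_{n+1} = L(Q_n) ⊕ M_{(1)}·Q_n, where L is the linear map sending M_{(β_1,...,β_k)} (composition of n) to M_{(β_1,...,β_{k−1},β_k+1)} (composition of n+1), and M_{(1)}·Q_n is the image of multiplication by M_{(1)}. -/
/-- The ambient free `ℚ`-module with basis the monomial quasisymmetric functions
`M_β`, indexed by compositions `β` written as lists of positive integers. -/
noncomputable def Lmap : (List ℕ →₀ ℚ) →ₗ[ℚ] (List ℕ →₀ ℚ) :=
  Finsupp.lsum ℚ (fun β => LinearMap.toSpanSingleton ℚ (List ℕ →₀ ℚ)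
    (if β = [] then 0
     else Finsupp.single (β.dropLast ++ [β.getLastD 0 + 1]) 1))

/-- Multiplication by `M_{(1)}`, via the product rule
`M_{(1)}·M_β = M_{(β,1)} + Σ_{i=1}^{k} (M_{(β_1,…,β_{i-1},1,β_i,…,β_k)}
+ M_{(β_1,…,β_i+1,…,β_k)})`. -/
noncomputable def mulM1 : (List ℕ →₀ ℚ) →ₗ[ℚ] (List ℕ →₀ ℚ) :=
  Finsupp.lsum ℚ (fun β => LinearMap.toSpanSingleton ℚ (List ℕ →₀ ℚ)
    (Finsupp.single (β ++ [1]) 1 +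
      ∑ j ∈ Finset.range β.length,
        (Finsupp.single (β.take j ++ 1 :: β.drop j) (1 : ℚ) +
         Finsupp.single (β.set j (β.getD j 0 + 1)) 1)))

/-- `Q_m`: the span of the `M_β` with `β` a composition of `m`. -/
noncomputable def Qm (m : ℕ) : Submodule ℚ (List ℕ →₀ ℚ) :=
  Submodule.span ℚ
    {v | ∃ β : List ℕ, β.sum = m ∧ (∀ a ∈ β, 0 < a) ∧ v = Finsupp.single β 1}

/-!
`L` maps `Q_n` onto the span of the `M_γ`, `γ ⊨ n + 1`, whose last part is at least `2`; the
remaining basis vectors of `Q_{n+1}` are the `M_{(β,1)}` with `β ⊨ n`. Weigh a composition by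
`oneMask`, the binary number whose `i`-th bit records whether the `i`-th part equals `1`. Then
`M_{(1)}·M_β` is a positive multiple of `M_{(β,1)}` plus terms of smaller weight: raising a part
never creates a `1`, and inserting a `1` inside `β` moves the top bit of `(β,1)` down. This
triangularity produces every `M_{(β,1)}` modulo `L(Q_n)` by induction on the weight, and shows that
`M_{(1)}·v` has a nonzero coefficient on some `M_{(β,1)}` when `v ≠ 0`, while `L(Q_n)` has none.
-/

open Finsupp

section Triangular

variable {R ι κ : Type*}

theorem Finsupp.single_mem_of_leading [DivisionRing R] (P : Submodule R (κ →₀ R))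
    {T : Set κ} (wt : κ → ℕ)
    (h : ∀ γ ∈ T, ∃ x ∈ P, x γ ≠ 0 ∧ x ∈ supported R R (insert γ {δ ∈ T | wt δ < wt γ}))
    {γ : κ} (hγ : γ ∈ T) : single γ 1 ∈ P := by
  obtain ⟨x, hxP, hxγ, hxT⟩ := h γ hγ
  have hlower : x - x γ • single γ 1 ∈ supported R R {δ ∈ T | wt δ < wt γ} := by
    rw [mem_supported']
    intro δ hδ
    by_cases hδγ : δ = γ
    · simp [hδγ]
    · rw [mem_supported'] at hxT
      simp [Ne.symm hδγ, hxT δ (by simp [hδγ, hδ])]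
  have hrest : x - x γ • single γ 1 ∈ P := by
    rw [supported_eq_span_single] at hlower
    refine Submodule.span_le.2 ?_ hlower
    rintro _ ⟨δ, ⟨hδT, hδ⟩, rfl⟩
    exact single_mem_of_leading P wt h hδT
  have hγ : single γ 1 = (x γ)⁻¹ • (x - (x - x γ • single γ 1)) := by
    rw [sub_sub_cancel, smul_smul, inv_mul_cancel₀ hxγ, one_smul]
  rw [hγ]
  exact P.smul_mem _ (P.sub_mem hxP hrest)
termination_by wt γ

theorem Finsupp.supported_le_of_leading [DivisionRing R] (P : Submodule R (κ →₀ R))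
    (T : Set κ) (wt : κ → ℕ)
    (h : ∀ γ ∈ T, ∃ x ∈ P, x γ ≠ 0 ∧ x ∈ supported R R (insert γ {δ ∈ T | wt δ < wt γ})) :
    supported R R T ≤ P := by
  rw [supported_eq_span_single, Submodule.span_le]
  rintro _ ⟨γ, hγ, rfl⟩
  exact single_mem_of_leading P wt h hγ

theorem Finsupp.exists_apply_ne_zero_of_leading [Semiring R] [NoZeroDivisors R]
    (f : (ι →₀ R) →ₗ[R] (κ →₀ R)) {S : Set ι} {e : ι → κ} (he : Set.InjOn e S) (wt : κ → ℕ)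
    (hdiag : ∀ i ∈ S, f (single i 1) (e i) ≠ 0)
    (htri : ∀ i ∈ S, f (single i 1) ∈ supported R R (insert (e i) {k | wt k < wt (e i)}))
    {v : ι →₀ R} (hvS : v ∈ supported R R S) (hv : v ≠ 0) : ∃ i ∈ S, f v (e i) ≠ 0 := by
  obtain ⟨i, hi, hmax⟩ := v.support.exists_max_image (wt ∘ e) (support_nonempty_iff.2 hv)
  have hiS : i ∈ S := (mem_supported R v).1 hvS hi
  have hoff : ∀ j ∈ v.support, j ≠ i → f (single j 1) (e i) = 0 := by
    intro j hj hji
    by_contra hne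
    have hjS : j ∈ S := (mem_supported R v).1 hvS hj
    rcases (mem_supported R _).1 (htri j hjS) (mem_support_iff.2 hne) with heq | hlt
    · exact hji (he hjS hiS heq.symm)
    · exact absurd (hmax j hj) (not_le.2 hlt)
  have hval : f v (e i) = v i * f (single i 1) (e i) := by
    conv_lhs => rw [← v.sum_single]
    rw [Finsupp.sum, map_sum, finsetSum_apply, Finset.sum_eq_single_of_mem i hi]
    · rw [← smul_single_one, map_smul, smul_apply, smul_eq_mul]
    · intro j hj hji
      rw [← smul_single_one, map_smul, smul_apply, smul_eq_mul, hoff j hj hji, mul_zero]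
  exact ⟨i, hiS, hval ▸ mul_ne_zero (mem_support_iff.1 hi) (hdiag i hiS)⟩

end Triangular

def oneMask : List ℕ → ℕ
  | [] => 0
  | a :: t => (if a = 1 then 1 else 0) + 2 * oneMask t

theorem oneMask_lt (l : List ℕ) : oneMask l < 2 ^ l.length := by
  induction l with
  | nil => simp [oneMask]
  | cons a t ih =>
    rw [oneMask, List.length_cons, pow_succ]
    split <;> omega

theorem oneMask_append_one (l : List ℕ) : oneMask (l ++ [1]) = oneMask l + 2 ^ l.length := by
  induction l with
  | nil => simp [oneMask]
  | cons a t ih =>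
    rw [List.cons_append, oneMask, ih, oneMask, List.length_cons, pow_succ]
    ring

theorem oneMask_set_le (l : List ℕ) (j : ℕ) {b : ℕ} (hb : b ≠ 1) :
    oneMask (l.set j b) ≤ oneMask l := by
  induction l generalizing j with
  | nil => simp
  | cons a t ih =>
    cases j with
    | zero => simp only [List.set_cons_zero, oneMask, if_neg hb]; omega
    | succ j => simp only [List.set_cons_succ, oneMask]; have := ih j; omega

theorem insertOne_eq_or_oneMask_lt (l : List ℕ) (j : ℕ) :
    l.take j ++ 1 :: l.drop j = l ++ [1] ∨
      oneMask (l.take j ++ 1 :: l.drop j) < oneMask (l ++ [1]) := by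
  induction l generalizing j with
  | nil => simp
  | cons a t ih =>
    cases j with
    | zero =>
      have ih0 := ih 0
      simp only [List.take_zero, List.drop_zero, List.nil_append, List.cons_append] at ih0 ⊢
      by_cases ha : a = 1
      · subst ha
        rcases ih0 with h | h
        · left; rw [h]
        · right; simp only [oneMask, if_true] at h ⊢; omega
      · right
        have := oneMask_lt t
        simp only [oneMask, if_neg ha, if_true, oneMask_append_one]
        omega
    | succ j =>
      simp only [List.take_succ_cons, List.drop_succ_cons, List.cons_append]
      rcases ih j with h | h
      · left; rw [h]
      · right; simp only [oneMask]; omega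

def compositions (m : ℕ) : Set (List ℕ) := {β | β.sum = m ∧ ∀ a ∈ β, 0 < a}

theorem Qm_eq_supported (m : ℕ) : Qm m = supported ℚ ℚ (compositions m) := by
  rw [supported_eq_span_single, Qm]
  congr 1
  ext v
  simp [compositions, and_assoc, eq_comm]

theorem concat_mem_compositions {L : List ℕ} {a m : ℕ} :
    L ++ [a] ∈ compositions m ↔ L.sum + a = m ∧ (∀ x ∈ L, 0 < x) ∧ 0 < a := by
  simp [compositions, or_imp, forall_and]

theorem ne_nil_of_mem_compositions_succ {γ : List ℕ} {m : ℕ} (h : γ ∈ compositions (m + 1)) :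
    γ ≠ [] := by
  rintro rfl; simp [compositions] at h

theorem List.Perm.mem_compositions_iff {β β' : List ℕ} (h : β.Perm β') {m : ℕ} :
    β ∈ compositions m ↔ β' ∈ compositions m := by
  simp only [compositions, Set.mem_ofPred_eq, h.sum_eq, h.mem_iff]

theorem cons_one_mem_compositions {β : List ℕ} {m : ℕ} (h : β ∈ compositions m) :
    1 :: β ∈ compositions (m + 1) := by
  obtain ⟨hsum, hpos⟩ := h
  refine ⟨by simp [hsum, add_comm], ?_⟩
  simpa using hpos

theorem insertOne_mem_compositions {β : List ℕ} {m : ℕ} (h : β ∈ compositions m) (j : ℕ) :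
    β.take j ++ 1 :: β.drop j ∈ compositions (m + 1) := by
  rw [List.perm_middle.mem_compositions_iff, List.take_append_drop]
  exact cons_one_mem_compositions h

theorem set_succ_mem_compositions {β : List ℕ} {m : ℕ} (h : β ∈ compositions m) {j : ℕ}
    (hj : j < β.length) : β.set j (β.getD j 0 + 1) ∈ compositions (m + 1) := by
  obtain ⟨hsum, hpos⟩ := h
  rw [List.getD_eq_getElem _ _ hj]
  refine ⟨?_, fun a ha => ?_⟩
  · have hsucc := List.sum_set β j (β[j] + 1)
    have hself := List.sum_set β j β[j]
    rw [List.set_getElem_self] at hself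
    simp only [if_pos hj] at hsucc hself
    omega
  · rcases List.mem_or_eq_of_mem_set ha with ha | rfl
    · exact hpos a ha
    · omega

theorem Lmap_single_nil : Lmap (single [] 1) = 0 := by
  rw [Lmap, lsum_single, LinearMap.toSpanSingleton_apply_one, if_pos rfl]

theorem Lmap_single_concat (L : List ℕ) (a : ℕ) :
    Lmap (single (L ++ [a]) 1) = single (L ++ [a + 1]) 1 := by
  rw [Lmap, lsum_single, LinearMap.toSpanSingleton_apply_one, if_neg (by simp)]
  simp

theorem map_Lmap_Qm (n : ℕ) :
    (Qm n).map Lmap = supported ℚ ℚ {γ ∈ compositions (n + 1) | 2 ≤ γ.getLastD 0} := by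
  apply le_antisymm
  · rw [Qm_eq_supported, supported_eq_span_single, Submodule.map_span_le]
    rintro _ ⟨β, hβ, rfl⟩
    rcases List.eq_nil_or_concat' β with rfl | ⟨L, a, rfl⟩
    · rw [Lmap_single_nil]; exact Submodule.zero_mem _
    · obtain ⟨hsum, hpos, ha⟩ := concat_mem_compositions.1 hβ
      rw [Lmap_single_concat]
      refine single_mem_supported ℚ 1 ⟨concat_mem_compositions.2 ⟨by omega, hpos, by omega⟩, ?_⟩
      simp only [List.getLastD_concat]; omega
  · rw [supported_eq_span_single, Submodule.span_le]
    rintro _ ⟨γ, ⟨hγ, hlast⟩, rfl⟩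
    obtain ⟨L, a, rfl⟩ := (List.eq_nil_or_concat' γ).resolve_left
      (ne_nil_of_mem_compositions_succ hγ)
    obtain ⟨hsum, hpos, -⟩ := concat_mem_compositions.1 hγ
    simp only [List.getLastD_concat] at hlast
    refine ⟨single (L ++ [a - 1]) 1, ?_, ?_⟩
    · rw [Qm_eq_supported]
      exact single_mem_supported ℚ 1 (concat_mem_compositions.2 ⟨by omega, hpos, by omega⟩)
    · rw [Lmap_single_concat, Nat.sub_add_cancel (by omega)]

theorem mulM1_single (β : List ℕ) :
    mulM1 (single β 1) = single (β ++ [1]) 1 +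
      ∑ j ∈ Finset.range β.length,
        (single (β.take j ++ 1 :: β.drop j) 1 + single (β.set j (β.getD j 0 + 1)) 1) := by
  rw [mulM1, lsum_single, LinearMap.toSpanSingleton_apply_one]

-- Inserting a `1` into a trailing run of `1`s also yields `β ++ [1]`: the coefficient may exceed 1.
theorem mulM1_single_apply_append_one_ne_zero (β : List ℕ) :
    mulM1 (single β 1) (β ++ [1]) ≠ 0 := by
  have hnonneg : 0 ≤ ∑ j ∈ Finset.range β.length,
      (single (β.take j ++ 1 :: β.drop j) (1 : ℚ) + single (β.set j (β.getD j 0 + 1)) 1) :=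
    Finset.sum_nonneg fun j _ => add_nonneg (single_nonneg.2 zero_le_one)
      (single_nonneg.2 zero_le_one)
  rw [mulM1_single, Finsupp.add_apply, single_eq_same]
  have := hnonneg (β ++ [1])
  simp only [coe_zero, Pi.zero_apply] at this
  linarith

theorem mulM1_single_mem_supported {β : List ℕ} {n : ℕ} (hβ : β ∈ compositions n) :
    mulM1 (single β 1) ∈ supported ℚ ℚ
      (insert (β ++ [1]) {γ ∈ compositions (n + 1) | oneMask γ < oneMask (β ++ [1])}) := by
  have hmask_lt : oneMask β < oneMask (β ++ [1]) := by
    rw [oneMask_append_one]; exact Nat.lt_add_of_pos_right (Nat.two_pow_pos _)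
  rw [mulM1_single]
  refine Submodule.add_mem _ (single_mem_supported ℚ 1 (Set.mem_insert _ _))
    (Submodule.sum_mem _ fun j hj => Submodule.add_mem _ ?_ ?_)
  · refine single_mem_supported ℚ 1 ?_
    rcases insertOne_eq_or_oneMask_lt β j with heq | hlt
    · exact heq ▸ Set.mem_insert _ _
    · exact Set.mem_insert_of_mem _ ⟨insertOne_mem_compositions hβ j, hlt⟩
  · have hj := Finset.mem_range.1 hj
    refine single_mem_supported ℚ 1 (Set.mem_insert_of_mem _
      ⟨set_succ_mem_compositions hβ hj, lt_of_le_of_lt (oneMask_set_le β j ?_) hmask_lt⟩)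
    have := hβ.2 _ (List.getD_eq_getElem β 0 hj ▸ List.getElem_mem hj)
    omega

theorem map_Lmap_sup_map_mulM1 (n : ℕ) :
    (Qm n).map Lmap ⊔ (Qm n).map mulM1 = Qm (n + 1) := by
  apply le_antisymm
  · refine sup_le ?_ ?_
    · rw [map_Lmap_Qm, Qm_eq_supported]
      exact supported_mono (Set.sep_subset _ _)
    · rw [Qm_eq_supported, Qm_eq_supported, supported_eq_span_single, Submodule.map_span_le]
      rintro _ ⟨β, hβ, rfl⟩
      refine supported_mono (Set.insert_subset ?_ (Set.sep_subset _ _))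
        (mulM1_single_mem_supported hβ)
      exact concat_mem_compositions.2 ⟨congrArg (· + 1) hβ.1, hβ.2, one_pos⟩
  · rw [Qm_eq_supported]
    refine supported_le_of_leading _ _ oneMask fun γ hγ => ?_
    obtain ⟨L, a, rfl⟩ := (List.eq_nil_or_concat' γ).resolve_left
      (ne_nil_of_mem_compositions_succ hγ)
    obtain ⟨hsum, hpos, ha⟩ := concat_mem_compositions.1 hγ
    by_cases ha1 : a = 1
    · subst ha1
      have hL : L ∈ compositions n := ⟨by omega, hpos⟩
      refine ⟨mulM1 (single L 1), Submodule.mem_sup_right ⟨single L 1, ?_, rfl⟩,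
        mulM1_single_apply_append_one_ne_zero L, mulM1_single_mem_supported hL⟩
      rw [Qm_eq_supported]
      exact single_mem_supported ℚ 1 hL
    · refine ⟨single (L ++ [a]) 1, Submodule.mem_sup_left ?_, by simp,
        single_mem_supported ℚ 1 (Set.mem_insert _ _)⟩
      rw [map_Lmap_Qm]
      refine single_mem_supported ℚ 1 ⟨hγ, ?_⟩
      simp only [List.getLastD_concat]
      omega

theorem map_Lmap_inf_map_mulM1 (n : ℕ) :
    (Qm n).map Lmap ⊓ (Qm n).map mulM1 = ⊥ := by
  rw [eq_bot_iff]
  rintro _ ⟨hxL, v, hv, rfl⟩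
  rw [Submodule.mem_bot]
  by_contra hx
  rw [Qm_eq_supported] at hv
  obtain ⟨β, -, hne⟩ := exists_apply_ne_zero_of_leading mulM1 (e := (· ++ [1]))
    (fun _ _ _ _ h => List.append_cancel_right h) oneMask
    (fun β _ => mulM1_single_apply_append_one_ne_zero β)
    (fun β hβ => supported_mono (Set.insert_subset_insert fun _ h => h.2)
      (mulM1_single_mem_supported hβ))
    hv (by rintro rfl; exact hx (map_zero _))
  rw [map_Lmap_Qm] at hxL
  have := ((mem_supported ℚ _).1 hxL (mem_support_iff.2 hne)).2
  simp at this

/-- for all `n ≥ 0`, `Q_{n+1} = L(Q_n) ⊕ M_{(1)}·Q_n`, where `L`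
sends `M_{(β_1,…,β_k)}` to `M_{(β_1,…,β_{k-1},β_k+1)}`. -/
theorem stmt_19 (n : ℕ) :
    Submodule.map Lmap (Qm n) ⊔ Submodule.map mulM1 (Qm n) = Qm (n + 1) ∧
    Submodule.map Lmap (Qm n) ⊓ Submodule.map mulM1 (Qm n) = ⊥ :=
  ⟨map_Lmap_sup_map_mulM1 n, map_Lmap_inf_map_mulM1 n⟩
end
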